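/- arXiv:2509.13522 — 2 statements merged into one kernel-verified Lean document; each statement's English description precedes it below -/
import Mathlib

section
/- Let g = A_{5,1} be the 5-dimensional metric Lie algebra with orthonormal basis v1,…,v5 and nonzero brackets [v1,v2] = α v4 + β v5, [v1,v3] = γ v5, with α, γ > 0 and β ∈ ℝ. Then ξ = Σ ξ_i v_i is affine if and only if ξ1 = ξ2 = ξ3 = 0, i.e. ξ ∈ Z(g) = span{v4, v5}. In particular, the homogeneous 2×2 system (α²+β²)ξ2 + βγ ξ3 = 0, βγ ξ2 + γ² ξ3 = 0 has determinant α²γ² > 0 and hence only the trivial solution. -/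
/-!
An alternating bilinear map is determined by its values on pairs of basis vectors `(e i, e j)`
with `i < j`, so `b` is the explicit bracket of `A_{5,1}`; the Koszul formula then determines `∇`
explicitly as well. Testing the affine condition on `(v1, v3)` in direction `v3` and on `(v2, v4)`
in directions `v4, v5` gives `γ²ξ1 = 0`, `α²ξ2 = 0` and `αγξ3 + αβξ2 = 0`. Conversely, if
`ξ1 = ξ2 = ξ3 = 0` then `ad ξ = 0`, and `∇` vanishes as soon as one argument is `0`.
-/

local notation "⟪" x ", " y "⟫" => @inner ℝ _ _ x y

/-- The underlying space `ℝ⁵`. -/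
abbrev V := EuclideanSpace ℝ (Fin 5)

/-- The standard orthonormal basis; `e 0,…,e 4` play the roles of `v1,…,v5`. -/
noncomputable def e (i : Fin 5) : V := EuclideanSpace.single i 1

theorem LinearMap.isAlt_of_forall_eq_neg {K M N : Type*} [Field K] [CharZero K] [AddCommGroup M]
    [Module K M] [AddCommGroup N] [Module K N] {B : M →ₗ[K] M →ₗ[K] N}
    (hB : ∀ x y, B x y = -B y x) : B.IsAlt := fun x => by
  have h := hB x x
  rw [eq_neg_iff_add_eq_zero, ← two_smul K] at h
  exact (smul_eq_zero.mp h).resolve_left two_ne_zero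

theorem LinearMap.IsAlt.ext_basis_of_lt {ι R M N : Type*} [LinearOrder ι] [CommSemiring R]
    [AddCommMonoid M] [Module R M] [AddCommGroup N] [Module R N] {B B' : M →ₗ[R] M →ₗ[R] N}
    (hB : B.IsAlt) (hB' : B'.IsAlt) (v : Module.Basis ι R M)
    (h : ∀ i j, i < j → B (v i) (v j) = B' (v i) (v j)) : B = B' := by
  refine LinearMap.ext_basis v v fun i j => ?_
  rcases lt_trichotomy i j with hij | rfl | hij
  · exact h i j hij
  · rw [hB, hB']
  · rw [← hB.neg, ← hB'.neg, h j i hij]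

theorem inner_e (u : V) (k : Fin 5) : ⟪u, e k⟫ = u k := by
  simp [e, EuclideanSpace.inner_single_right]

theorem e_inner (k : Fin 5) (u : V) : ⟪e k, u⟫ = u k := by
  rw [real_inner_comm, inner_e]

theorem e_apply (i j : Fin 5) : e i j = if j = i then 1 else 0 :=
  PiLp.single_apply 2 ℝ i 1 j

noncomputable def a51Bracket (α β γ : ℝ) : V →ₗ[ℝ] V →ₗ[ℝ] V :=
  LinearMap.mk₂ ℝ
    (fun x y => (x 0 * y 1 - x 1 * y 0) • (α • e 3 + β • e 4) + (x 0 * y 2 - x 2 * y 0) • (γ • e 4))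
    (fun _ _ _ => by simp only [PiLp.add_apply]; module)
    (fun _ _ _ => by simp only [PiLp.smul_apply, smul_eq_mul]; module)
    (fun _ _ _ => by simp only [PiLp.add_apply]; module)
    (fun _ _ _ => by simp only [PiLp.smul_apply, smul_eq_mul]; module)

theorem a51Bracket_apply (α β γ : ℝ) (x y : V) : a51Bracket α β γ x y =
    (x 0 * y 1 - x 1 * y 0) • (α • e 3 + β • e 4) + (x 0 * y 2 - x 2 * y 0) • (γ • e 4) := rfl

theorem a51Bracket_isAlt (α β γ : ℝ) : (a51Bracket α β γ).IsAlt := fun x => by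
  rw [a51Bracket_apply, mul_comm (x 1), mul_comm (x 2)]; simp

theorem eq_a51Bracket {α β γ : ℝ} {b : V →ₗ[ℝ] V →ₗ[ℝ] V} (hskew : ∀ x y, b x y = - b y x)
    (h12 : b (e 0) (e 1) = α • e 3 + β • e 4) (h13 : b (e 0) (e 2) = γ • e 4)
    (hzero : ∀ i j : Fin 5, i < j →
      (i, j) ∉ ({(0, 1), (0, 2)} : Set (Fin 5 × Fin 5)) → b (e i) (e j) = 0) :
    b = a51Bracket α β γ := by
  refine (LinearMap.isAlt_of_forall_eq_neg hskew).ext_basis_of_lt (a51Bracket_isAlt α β γ)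
    (EuclideanSpace.basisFun (Fin 5) ℝ).toBasis fun i j hij => ?_
  simp only [OrthonormalBasis.coe_toBasis, EuclideanSpace.basisFun_apply]
  change b (e i) (e j) = a51Bracket α β γ (e i) (e j)
  by_cases h : (i, j) ∈ ({(0, 1), (0, 2)} : Set (Fin 5 × Fin 5))
  · rcases h with h | h <;> obtain ⟨rfl, rfl⟩ := Prod.ext_iff.mp h
    · rw [h12, a51Bracket_apply]; simp [e]
    · rw [h13, a51Bracket_apply]; simp [e]
  · rw [hzero i j hij h, a51Bracket_apply]
    fin_cases i <;> fin_cases j <;> simp [e] at hij h ⊢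

noncomputable def a51Connection (α β γ : ℝ) (x y : V) : V := (2 : ℝ)⁻¹ • !₂[
  α * (x 1 * y 3 + x 3 * y 1) + β * (x 1 * y 4 + x 4 * y 1) + γ * (x 2 * y 4 + x 4 * y 2),
  -(α * (x 0 * y 3 + x 3 * y 0) + β * (x 0 * y 4 + x 4 * y 0)),
  -(γ * (x 0 * y 4 + x 4 * y 0)),
  α * (x 0 * y 1 - x 1 * y 0),
  β * (x 0 * y 1 - x 1 * y 0) + γ * (x 0 * y 2 - x 2 * y 0)]

theorem eq_a51Connection {α β γ : ℝ} {nab : V → V → V}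
    (hkoszul : ∀ x y z, 2 * ⟪nab x y, z⟫ =
      ⟪a51Bracket α β γ x y, z⟫ - ⟪a51Bracket α β γ y z, x⟫ + ⟪a51Bracket α β γ z x, y⟫) :
    nab = a51Connection α β γ := by
  ext x y k
  have h := hkoszul x y (e k)
  rw [inner_e] at h
  fin_cases k <;>
    simp only [a51Bracket_apply, a51Connection, inner_add_left, real_inner_smul_left, e_inner,
      PiLp.smul_apply, smul_eq_mul, e_apply, Fin.isValue, Fin.zero_eta, Fin.mk_one,
      Fin.reduceFinMk, Fin.reduceEq, ↓reduceIte, Matrix.cons_val] at h ⊢ <;>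
    linear_combination h / 2

def IsAffine {R E : Type*} [CommRing R] [AddCommGroup E] [Module R E] (b : E →ₗ[R] E →ₗ[R] E)
    (nab : E → E → E) (ξ : E) : Prop :=
  ∀ v w, b ξ (nab v w) - nab (b ξ v) w - nab v (b ξ w) = 0

theorem isAffine_a51_iff {α β γ : ℝ} (hα : α ≠ 0) (hγ : γ ≠ 0) (ξ : V) :
    IsAffine (a51Bracket α β γ) (a51Connection α β γ) ξ ↔ ξ 0 = 0 ∧ ξ 1 = 0 ∧ ξ 2 = 0 := by
  constructor
  · intro h
    have h02_2 := congrArg (· 2) (h (e 0) (e 2))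
    have h13_3 := congrArg (· 3) (h (e 1) (e 3))
    have h13_4 := congrArg (· 4) (h (e 1) (e 3))
    simp only [a51Bracket_apply, a51Connection, PiLp.sub_apply, PiLp.add_apply, PiLp.smul_apply,
      PiLp.zero_apply, smul_eq_mul, e_apply, Fin.isValue, Fin.reduceEq, ↓reduceIte,
      Matrix.cons_val] at h02_2 h13_3 h13_4
    have h0 : ξ 0 = 0 := by
      simpa [hγ] using (by linear_combination 2 * h02_2 : γ * γ * ξ 0 = 0)
    have h1 : ξ 1 = 0 := by
      simpa [hα] using (by linear_combination -2 * h13_3 : α * α * ξ 1 = 0)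
    have h2 : ξ 2 = 0 := by
      simpa [hα, hγ] using (by linear_combination -2 * h13_4 - α * β * h1 : α * γ * ξ 2 = 0)
    exact ⟨h0, h1, h2⟩
  · rintro ⟨h0, h1, h2⟩ v w
    ext k
    fin_cases k <;> simp [a51Bracket_apply, a51Connection, h0, h1, h2]

theorem eq_zero_and_eq_zero_of_det_ne_zero {K : Type*} [Field K] {a b c d x y : K}
    (hdet : a * d - b * c ≠ 0) (h₁ : a * x + b * y = 0) (h₂ : c * x + d * y = 0) :
    x = 0 ∧ y = 0 := by
  refine ⟨?_, ?_⟩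
  · simpa [hdet] using (by linear_combination d * h₁ - b * h₂ : (a * d - b * c) * x = 0)
  · simpa [hdet] using (by linear_combination a * h₂ - c * h₁ : (a * d - b * c) * y = 0)

/-- on `A_{5,1}` (brackets `[v1,v2]=αv4+βv5`, `[v1,v3]=γv5`, `α,γ>0`),
`ξ` is affine iff `ξ1=ξ2=ξ3=0`, i.e. `ξ ∈ Z(g) = span{v4,v5}`; in particular the
homogeneous `2×2` system has determinant `α²γ² > 0` and only the trivial solution. -/
theorem stmt_13
    (α β γ : ℝ) (hα : 0 < α) (hγ : 0 < γ)
    (b : V →ₗ[ℝ] V →ₗ[ℝ] V)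
    (hskew : ∀ x y, b x y = - b y x)
    (h12 : b (e 0) (e 1) = α • e 3 + β • e 4)
    (h13 : b (e 0) (e 2) = γ • e 4)
    (hzero : ∀ i j : Fin 5, i < j →
      (i, j) ∉ ({(0, 1), (0, 2)} : Set (Fin 5 × Fin 5)) → b (e i) (e j) = 0)
    (nab : V → V → V)
    (hkoszul : ∀ x y z, 2 * ⟪nab x y, z⟫ = ⟪b x y, z⟫ - ⟪b y z, x⟫ + ⟪b z x, y⟫)
    (ξ : V) :
    ((∀ v w, b ξ (nab v w) - nab (b ξ v) w - nab v (b ξ w) = 0) ↔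
      (ξ 0 = 0 ∧ ξ 1 = 0 ∧ ξ 2 = 0)) ∧
    ((α^2 + β^2) * γ^2 - (β*γ) * (β*γ) = α^2 * γ^2 ∧ 0 < α^2 * γ^2) ∧
    (∀ x2 x3 : ℝ, (α^2 + β^2) * x2 + β*γ*x3 = 0 → β*γ*x2 + γ^2*x3 = 0 →
      x2 = 0 ∧ x3 = 0) := by
  obtain rfl := eq_a51Bracket hskew h12 h13 hzero
  obtain rfl := eq_a51Connection hkoszul
  have hdet : (α^2 + β^2) * γ^2 - (β*γ) * (β*γ) = α^2 * γ^2 := by ring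
  have hpos : 0 < α^2 * γ^2 := by positivity
  refine ⟨isAffine_a51_iff hα.ne' hγ.ne' ξ, ⟨hdet, hpos⟩, fun x2 x3 h₁ h₂ => ?_⟩
  exact eq_zero_and_eq_zero_of_det_ne_zero (hdet ▸ hpos.ne') h₁ h₂
end

section
/- Let g = A_{3,1} ⊕ 2A_1 be the 5-dimensional metric Lie algebra with orthonormal basis v1,…,v5 and only nonzero bracket [v1,v2] = α v5, α > 0. If ξ ∈ g and ω ∈ g* satisfy (L_ξ∇)(v,w) = ω(v)w + ω(w)v for all v,w ∈ g, then ω = 0, ξ1 = ξ2 = 0, and ξ ∈ Z(g); thus every left-invariant projective vector field is affine. -/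
/-! The Koszul formula determines the Levi-Civita connection explicitly. Since `∇_{v_i} v_i = 0`
and `[ξ, v_i]` is a multiple of the central vector `v₅`, the `v₂`-component of the projective
equation at `(v₁, v₁)` reads `-α² ξ₂ = 0` and the `v₁`-component at `(v₂, v₂)` reads
`-α² ξ₁ = 0`. Hence `ξ` is central, `L_ξ∇ = 0`, and `ω(v) w + ω(w) v = 0` forces `ω = 0`. -/

local notation "⟪" x ", " y "⟫" => @inner ℝ _ _ x y

theorem LinearMap.ext_basis_of_skew {ι R M N : Type*} [LinearOrder ι] [CommSemiring R]
    [AddCommMonoid M] [AddCommGroup N] [IsAddTorsionFree N] [Module R M] [Module R N]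
    (bs : Module.Basis ι R M) {B B' : M →ₗ[R] M →ₗ[R] N}
    (hB : ∀ x y, B x y = -B y x) (hB' : ∀ x y, B' x y = -B' y x)
    (h : ∀ i j, i < j → B (bs i) (bs j) = B' (bs i) (bs j)) : B = B' := by
  refine LinearMap.ext_basis bs bs fun i j => ?_
  rcases lt_trichotomy i j with hij | rfl | hji
  · exact h i j hij
  · rw [self_eq_neg.mp (hB _ _), self_eq_neg.mp (hB' _ _)]
  · rw [hB, hB', h j i hji]

theorem LinearMap.eq_zero_of_smul_add_smul_eq_zero {K M : Type*} [Field K] [CharZero K]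
    [AddCommGroup M] [Module K M] {ω : M →ₗ[K] K} (h : ∀ v w, ω v • w + ω w • v = 0) :
    ω = 0 := by
  ext v
  rcases smul_eq_zero.mp ((add_smul (ω v) (ω v) v).trans (h v v)) with hv | rfl
  · exact add_self_eq_zero.mp hv
  · exact map_zero ω

namespace A31

@[simp] lemma e_apply (i j : Fin 5) : e i j = if j = i then 1 else 0 :=
  PiLp.single_apply _ _ _ _ _

lemma inner_e_left (i : Fin 5) (u : V) : ⟪e i, u⟫ = u i := by
  simp [e, EuclideanSpace.inner_single_left]

noncomputable def bracket (α : ℝ) : V →ₗ[ℝ] V →ₗ[ℝ] V :=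
  LinearMap.mk₂ ℝ (fun x y => (α * (x 0 * y 1 - x 1 * y 0)) • e 4)
    (fun _ _ _ => by simp only [PiLp.add_apply, ← add_smul]; ring_nf)
    (fun _ _ _ => by simp only [PiLp.smul_apply, smul_eq_mul, smul_smul]; ring_nf)
    (fun _ _ _ => by simp only [PiLp.add_apply, ← add_smul]; ring_nf)
    (fun _ _ _ => by simp only [PiLp.smul_apply, smul_eq_mul, smul_smul]; ring_nf)

@[simp] lemma bracket_apply (α : ℝ) (x y : V) :
    bracket α x y = (α * (x 0 * y 1 - x 1 * y 0)) • e 4 := rfl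

lemma bracket_skew (α : ℝ) (x y : V) : bracket α x y = -bracket α y x := by
  simp only [bracket_apply, ← neg_smul]
  ring_nf

lemma eq_bracket {α : ℝ} {b : V →ₗ[ℝ] V →ₗ[ℝ] V} (hskew : ∀ x y, b x y = -b y x)
    (h12 : b (e 0) (e 1) = α • e 4)
    (hzero : ∀ i j : Fin 5, i < j → (i, j) ≠ ((0 : Fin 5), (1 : Fin 5)) → b (e i) (e j) = 0) :
    b = bracket α := by
  have := IsAddTorsionFree.of_isTorsionFree ℝ V
  refine LinearMap.ext_basis_of_skew (EuclideanSpace.basisFun (Fin 5) ℝ).toBasis hskew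
    (bracket_skew α) fun i j hij => ?_
  simp only [OrthonormalBasis.coe_toBasis, EuclideanSpace.basisFun_apply]
  change b (e i) (e j) = bracket α (e i) (e j)
  by_cases h01 : (i, j) = (0, 1)
  · obtain ⟨rfl, rfl⟩ := Prod.ext_iff.mp h01
    simp [h12]
  · rw [hzero i j hij h01]
    fin_cases i <;> fin_cases j <;> simp at hij h01 ⊢

noncomputable def nabla (α : ℝ) (x y : V) : V :=
  (α / 2) • ((x 1 * y 4 + x 4 * y 1) • e 0 - (x 0 * y 4 + x 4 * y 0) • e 1
    + (x 0 * y 1 - x 1 * y 0) • e 4)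

lemma eq_nabla {α : ℝ} {nab : V → V → V}
    (hkoszul : ∀ x y z, 2 * ⟪nab x y, z⟫ = ⟪bracket α x y, z⟫ - ⟪bracket α y z, x⟫
      + ⟪bracket α z x, y⟫) :
    nab = nabla α := by
  ext x y : 2
  refine ext_inner_right ℝ fun z => ?_
  have h := hkoszul x y z
  simp only [nabla, bracket_apply, real_inner_smul_left, inner_add_left, inner_sub_left,
    inner_e_left] at h ⊢
  linarith

lemma nabla_zero_left (α : ℝ) (y : V) : nabla α 0 y = 0 := by simp [nabla]

lemma nabla_zero_right (α : ℝ) (x : V) : nabla α x 0 = 0 := by simp [nabla]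

def IsProjective (α : ℝ) (ξ : V) (ω : V →ₗ[ℝ] ℝ) : Prop :=
  ∀ v w, bracket α ξ (nabla α v w) - nabla α (bracket α ξ v) w - nabla α v (bracket α ξ w)
    = ω v • w + ω w • v

namespace IsProjective

variable {α : ℝ} {ξ : V} {ω : V →ₗ[ℝ] ℝ}

lemma apply_zero_eq_zero (hP : IsProjective α ξ ω) (hα : α ≠ 0) : ξ 0 = 0 := by
  have h : -(α / 2 * (α * ξ 0)) - α / 2 * (α * ξ 0) = 0 := by
    simpa [nabla] using congrArg (· 0) (hP (e 1) (e 1))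
  have h' : α ^ 2 * ξ 0 = 0 := by linear_combination -h
  simpa [hα] using h'

lemma apply_one_eq_zero (hP : IsProjective α ξ ω) (hα : α ≠ 0) : ξ 1 = 0 := by
  have h : -(α / 2 * (α * ξ 1)) - α / 2 * (α * ξ 1) = 0 := by
    simpa [nabla] using congrArg (· 1) (hP (e 0) (e 0))
  have h' : α ^ 2 * ξ 1 = 0 := by linear_combination -h
  simpa [hα] using h'

lemma bracket_eq_zero (hP : IsProjective α ξ ω) (hα : α ≠ 0) : bracket α ξ = 0 := by
  ext v : 1
  simp [hP.apply_zero_eq_zero hα, hP.apply_one_eq_zero hα]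

lemma oneForm_eq_zero (hP : IsProjective α ξ ω) (hα : α ≠ 0) : ω = 0 := by
  refine LinearMap.eq_zero_of_smul_add_smul_eq_zero fun v w => ?_
  simpa [hP.bracket_eq_zero hα, nabla_zero_left, nabla_zero_right] using (hP v w).symm

end IsProjective

lemma mem_span_e_two_three_four {ξ : V} (h0 : ξ 0 = 0) (h1 : ξ 1 = 0) :
    ξ ∈ Submodule.span ℝ ({e 2, e 3, e 4} : Set V) := by
  have hξ : ξ = ξ 2 • e 2 + ξ 3 • e 3 + ξ 4 • e 4 := by
    ext i
    fin_cases i <;> simp [h0, h1]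
  rw [hξ]
  refine add_mem (add_mem ?_ ?_) ?_ <;>
    exact Submodule.smul_mem _ _ (Submodule.subset_span (by simp))

end A31

/-- on `A_{3,1} ⊕ 2A_1`, every left-invariant projective vector field has
vanishing associated 1-form, lies in the center, and hence is affine. -/
theorem stmt_17
    (α : ℝ) (hα : 0 < α)
    (b : V →ₗ[ℝ] V →ₗ[ℝ] V)
    (hskew : ∀ x y, b x y = - b y x)
    (h12 : b (e 0) (e 1) = α • e 4)
    (hzero : ∀ i j : Fin 5, i < j → (i, j) ≠ ((0 : Fin 5), (1 : Fin 5)) → b (e i) (e j) = 0)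
    (nab : V → V → V)
    (hkoszul : ∀ x y z, 2 * ⟪nab x y, z⟫ = ⟪b x y, z⟫ - ⟪b y z, x⟫ + ⟪b z x, y⟫)
    (ξ : V) (ω : V →ₗ[ℝ] ℝ)
    (hproj : ∀ v w, b ξ (nab v w) - nab (b ξ v) w - nab v (b ξ w) = ω v • w + ω w • v) :
    ω = 0 ∧ ξ 0 = 0 ∧ ξ 1 = 0 ∧ ξ ∈ Submodule.span ℝ ({e 2, e 3, e 4} : Set V) := by
  obtain rfl := A31.eq_bracket hskew h12 hzero
  obtain rfl := A31.eq_nabla hkoszul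
  have hP : A31.IsProjective α ξ ω := hproj
  have h0 := hP.apply_zero_eq_zero hα.ne'
  have h1 := hP.apply_one_eq_zero hα.ne'
  exact ⟨hP.oneForm_eq_zero hα.ne', h0, h1, A31.mem_span_e_two_three_four h0 h1⟩
end
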